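/- Let c ≥ 7 and let J ⊆ S = ℚ[x_i : i ∈ ℤ/cℤ] be generated by the quadrics x_i x_j (cyclic distance ≥ 3) and x_i² − x_{i−1}x_{i−3}. Then the monomial x_0 x_1 x_2² does NOT belong to J; in particular the degree-4 component of S/J is nonzero (it is one-dimensional, spanned by the common image of the monomials x_i x_{i+1} x_{i+2}²). -/
import Mathlib


open MvPolynomial

/-- The ideal `J` of `ℚ[x_i : i ∈ ℤ/cℤ]` generated by the monomials `x_i x_j` for
pairs of cyclic distance `≥ 3` together with the binomials `x_i² − x_{i−1} x_{i−3}`. -/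
noncomputable def cyclicQuadricIdeal (c : ℕ) [NeZero c] : Ideal (MvPolynomial (ZMod c) ℚ) :=
  Ideal.span
    ({p | ∃ i j : ZMod c, 3 ≤ (i - j).val ∧ 3 ≤ (j - i).val ∧ p = X i * X j} ∪
     {p | ∃ i : ZMod c, p = X i ^ 2 - X (i - 1) * X (i - 3)})

namespace CyclicQuadricAux

variable {c : ℕ} [NeZero c]

/-- `e i` is the exponent vector of the variable `x_i`. -/
noncomputable def e (i : ZMod c) : ZMod c →₀ ℕ := Finsupp.single i 1

/-- `D k` is the exponent vector of the monomial `x_k x_{k+1} x_{k+2}²`. -/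
noncomputable def D (k : ZMod c) : ZMod c →₀ ℕ := e k + e (k + 1) + e (k + 2) + e (k + 2)

lemma X_eq (s : ZMod c) : (X s : MvPolynomial (ZMod c) ℚ) = monomial (e s) 1 := rfl

lemma cast_ne_zero (hc : 7 ≤ c) {n : ℕ} (h0 : 0 < n) (h1 : n < 7) :
    ((n : ℕ) : ZMod c) ≠ 0 := by
  rw [Ne, ZMod.natCast_eq_zero_iff]
  intro hdvd
  exact absurd (Nat.le_of_dvd h0 hdvd) (by omega)

lemma one_ne_zero' (hc : 7 ≤ c) : (1 : ZMod c) ≠ 0 := by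
  simpa using cast_ne_zero hc (n := 1) (by omega) (by omega)

lemma two_ne_zero' (hc : 7 ≤ c) : (2 : ZMod c) ≠ 0 := by
  simpa using cast_ne_zero hc (n := 2) (by omega) (by omega)

lemma three_ne_zero' (hc : 7 ≤ c) : (3 : ZMod c) ≠ 0 := by
  simpa using cast_ne_zero hc (n := 3) (by omega) (by omega)

lemma four_ne_zero' (hc : 7 ≤ c) : (4 : ZMod c) ≠ 0 := by
  simpa using cast_ne_zero hc (n := 4) (by omega) (by omega)

lemma val_one' (hc : 7 ≤ c) : (1 : ZMod c).val = 1 := by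
  rw [← Nat.cast_one, ZMod.val_cast_of_lt (by omega)]

lemma val_two' (hc : 7 ≤ c) : (2 : ZMod c).val = 2 := by
  rw [show ((2 : ZMod c)) = ((2 : ℕ) : ZMod c) by push_cast; ring,
    ZMod.val_cast_of_lt (by omega)]

lemma D_apply (k a : ZMod c) :
    D k a = (if k = a then 1 else 0) + (if k + 1 = a then 1 else 0) +
      (if k + 2 = a then 1 else 0) + (if k + 2 = a then 1 else 0) := by
  simp [D, e, Finsupp.add_apply, Finsupp.single_apply]

/-- The support of `D k` is contained in the window `{k, k+1, k+2}`. -/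
lemma mem_window {k a : ZMod c} (h : 1 ≤ D k a) : a = k ∨ a = k + 1 ∨ a = k + 2 := by
  by_contra hcon
  push_neg at hcon
  obtain ⟨h1, h2, h3⟩ := hcon
  rw [D_apply, if_neg (fun hh => h1 hh.symm), if_neg (fun hh => h2 hh.symm),
    if_neg (fun hh => h3 hh.symm)] at h
  simp at h

/-- The only point where `D k` has multiplicity `≥ 2` is `k + 2`. -/
lemma eq_of_two_le (hc : 7 ≤ c) {k a : ZMod c} (h : 2 ≤ D k a) : a = k + 2 := by
  by_contra hne
  rw [D_apply, if_neg (show ¬ k + 2 = a from fun hh => hne hh.symm)] at h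
  by_cases p1 : k = a
  · by_cases p2 : k + 1 = a
    · exact one_ne_zero' hc (by linear_combination p2 - p1)
    · rw [if_pos p1, if_neg p2] at h; omega
  · by_cases p2 : k + 1 = a
    · rw [if_neg p1, if_pos p2] at h; omega
    · rw [if_neg p1, if_neg p2] at h; omega

lemma le_window {i j k : ZMod c} (h : e i + e j ≤ D k) :
    (i = k ∨ i = k + 1 ∨ i = k + 2) ∧ (j = k ∨ j = k + 1 ∨ j = k + 2) := by
  constructor
  · refine mem_window (le_trans ?_ (h i))
    simp [e, Finsupp.add_apply, Finsupp.single_apply]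
  · refine mem_window (le_trans ?_ (h j))
    simp [e, Finsupp.add_apply, Finsupp.single_apply]

/-- Far pairs never divide the monomials `D k`. -/
lemma term_far (hc : 7 ≤ c) {i j : ZMod c} (hij : 3 ≤ (i - j).val) (hji : 3 ≤ (j - i).val)
    (f : MvPolynomial (ZMod c) ℚ) (k : ZMod c) :
    coeff (D k) (f * (X i * X j)) = 0 := by
  have hXX : (X i * X j : MvPolynomial (ZMod c) ℚ) = monomial (e i + e j) 1 := by
    rw [X_eq, X_eq, monomial_mul, mul_one]
  rw [mul_comm f, hXX, coeff_monomial_mul']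
  rw [if_neg]
  intro hle
  obtain ⟨hi, hj⟩ := le_window hle
  have hv1 := val_one' hc
  have hv2 := val_two' hc
  rcases hi with hi | hi | hi <;> rcases hj with hj | hj | hj
  · rw [show i - j = 0 by rw [hi, hj]; ring, ZMod.val_zero] at hij; omega
  · rw [show j - i = 1 by rw [hi, hj]; ring, hv1] at hji; omega
  · rw [show j - i = 2 by rw [hi, hj]; ring, hv2] at hji; omega
  · rw [show i - j = 1 by rw [hi, hj]; ring, hv1] at hij; omega
  · rw [show i - j = 0 by rw [hi, hj]; ring, ZMod.val_zero] at hij; omega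
  · rw [show j - i = 1 by rw [hi, hj]; ring, hv1] at hji; omega
  · rw [show i - j = 2 by rw [hi, hj]; ring, hv2] at hij; omega
  · rw [show i - j = 1 by rw [hi, hj]; ring, hv1] at hij; omega
  · rw [show i - j = 0 by rw [hi, hj]; ring, ZMod.val_zero] at hij; omega

lemma term_sq (hc : 7 ≤ c) (f : MvPolynomial (ZMod c) ℚ) (i k : ZMod c) :
    coeff (D k) (f * (X i * X i)) =
      if i = k + 2 then coeff (e k + e (k + 1)) f else 0 := by
  have hXX : (X i * X i : MvPolynomial (ZMod c) ℚ) = monomial (e i + e i) 1 := by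
    rw [X_eq, monomial_mul, mul_one]
  rw [mul_comm f, hXX, coeff_monomial_mul']
  by_cases hik : i = k + 2
  · subst hik
    have hD : D k = (e k + e (k + 1)) + (e (k + 2) + e (k + 2)) := by
      rw [D, add_assoc]
    rw [if_pos, if_pos rfl, one_mul, hD, add_tsub_cancel_right]
    rw [hD]
    exact le_add_self
  · rw [if_neg, if_neg hik]
    intro hle
    apply hik
    apply eq_of_two_le hc (k := k) (a := i)
    have := hle i
    simpa [e, Finsupp.add_apply, Finsupp.single_apply] using this

lemma term_pair (hc : 7 ≤ c) (f : MvPolynomial (ZMod c) ℚ) (i k : ZMod c) :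
    coeff (D k) (f * (X (i - 1) * X (i - 3))) =
      if k = i - 3 then coeff (e (i - 2) + e (i - 1)) f else 0 := by
  have hXX : (X (i - 1) * X (i - 3) : MvPolynomial (ZMod c) ℚ) =
      monomial (e (i - 1) + e (i - 3)) 1 := by
    rw [X_eq, X_eq, monomial_mul, mul_one]
  rw [mul_comm f, hXX, coeff_monomial_mul']
  by_cases hk : k = i - 3
  · subst hk
    have ha1 : i - 3 + 1 = i - 2 := by ring
    have ha2 : i - 3 + 2 = i - 1 := by ring
    have hD : D (i - 3) = (e (i - 2) + e (i - 1)) + (e (i - 1) + e (i - 3)) := by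
      rw [D, ha1, ha2]; abel
    rw [if_pos, if_pos rfl, one_mul, hD, add_tsub_cancel_right]
    rw [hD]
    exact le_add_self
  · rw [if_neg, if_neg hk]
    intro hle
    obtain ⟨hA, hB⟩ := le_window hle
    rcases hA with hA | hA | hA <;> rcases hB with hB | hB | hB
    · exact two_ne_zero' hc (by linear_combination hA - hB)
    · exact three_ne_zero' hc (by linear_combination hA - hB)
    · exact four_ne_zero' hc (by linear_combination hA - hB)
    · exact one_ne_zero' hc (by linear_combination hA - hB)
    · exact two_ne_zero' hc (by linear_combination hA - hB)
    · exact three_ne_zero' hc (by linear_combination hA - hB)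
    · exact hk hB.symm
    · exact one_ne_zero' hc (by linear_combination hA - hB)
    · exact two_ne_zero' hc (by linear_combination hA - hB)

lemma sum_sq (hc : 7 ≤ c) (f : MvPolynomial (ZMod c) ℚ) (i : ZMod c) :
    ∑ k : ZMod c, coeff (D k) (f * (X i * X i)) = coeff (e (i - 2) + e (i - 1)) f := by
  have key : ∀ k : ZMod c, coeff (D k) (f * (X i * X i)) =
      if k = i - 2 then coeff (e (i - 2) + e (i - 1)) f else 0 := by
    intro k
    rw [term_sq hc]
    by_cases hk : k = i - 2
    · subst hk
      rw [if_pos rfl, if_pos (show i = i - 2 + 2 by ring)]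
      have h1 : i - 2 + 1 = i - 1 := by ring
      rw [h1]
    · rw [if_neg hk, if_neg]
      intro hik
      exact hk (by linear_combination -hik)
  rw [Finset.sum_congr rfl (fun k _ => key k)]
  simp

lemma sum_pair (hc : 7 ≤ c) (f : MvPolynomial (ZMod c) ℚ) (i : ZMod c) :
    ∑ k : ZMod c, coeff (D k) (f * (X (i - 1) * X (i - 3))) =
      coeff (e (i - 2) + e (i - 1)) f := by
  rw [Finset.sum_congr rfl (fun k _ => term_pair hc f i k)]
  simp

lemma target_eq : (X 0 * X 1 * X 2 ^ 2 : MvPolynomial (ZMod c) ℚ) = monomial (D 0) 1 := by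
  rw [X_pow_eq_monomial, X_eq, X_eq, monomial_mul, monomial_mul, mul_one, mul_one]
  congr 1
  rw [D, show (0 : ZMod c) + 1 = 1 by ring, show (0 : ZMod c) + 2 = 2 by ring,
    show (2 : ℕ) = 1 + 1 from rfl, Finsupp.single_add, ← add_assoc]
  rfl

lemma sum_target (hc : 7 ≤ c) :
    ∑ k : ZMod c, coeff (D k) (X 0 * X 1 * X 2 ^ 2 : MvPolynomial (ZMod c) ℚ) = 1 := by
  have key : ∀ k : ZMod c, coeff (D k) (X 0 * X 1 * X 2 ^ 2 : MvPolynomial (ZMod c) ℚ) =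
      if k = 0 then 1 else 0 := by
    intro k
    rw [target_eq, coeff_monomial]
    by_cases hk : k = 0
    · subst hk; rw [if_pos rfl, if_pos rfl]
    · rw [if_neg hk, if_neg]
      intro hEq
      apply hk
      have h2 := DFunLike.congr_fun hEq (k + 2)
      have hval : D k (k + 2) = 2 := by
        rw [D_apply, if_neg (show ¬ k = k + 2 from fun hh =>
            two_ne_zero' hc (by linear_combination -hh)),
          if_neg (show ¬ k + 1 = k + 2 from fun hh =>
            one_ne_zero' hc (by linear_combination -hh)), if_pos rfl]
      rw [hval] at h2
      have := eq_of_two_le hc (k := (0 : ZMod c)) (a := k + 2) (by omega)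
      linear_combination this
  rw [Finset.sum_congr rfl (fun k _ => key k)]
  simp

end CyclicQuadricAux

open CyclicQuadricAux in
/-- For `c ≥ 7`, the monomial `x_0 x_1 x_2²` does not belong to `J`; in particular
the degree-4 component of `S/J` is nonzero. -/
theorem monomial_not_mem_cyclicQuadricIdeal (c : ℕ) (hc : 7 ≤ c) [NeZero c] :
    X 0 * X 1 * X 2 ^ 2 ∉ cyclicQuadricIdeal c := by
  intro hmem
  have key : ∀ f : MvPolynomial (ZMod c) ℚ,
      ∑ k : ZMod c, coeff (D k) (f * (X 0 * X 1 * X 2 ^ 2)) = 0 := by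
    refine Submodule.span_induction
      (p := fun x _ => ∀ f : MvPolynomial (ZMod c) ℚ,
        ∑ k : ZMod c, coeff (D k) (f * x) = 0) ?_ ?_ ?_ ?_ hmem
    · rintro x (⟨i, j, hij, hji, rfl⟩ | ⟨i, rfl⟩) f
      · exact Finset.sum_eq_zero fun k _ => term_far hc hij hji f k
      · have hsplit : f * (X i ^ 2 - X (i - 1) * X (i - 3)) =
            f * (X i * X i) - f * (X (i - 1) * X (i - 3)) := by ring
        rw [hsplit]
        simp only [coeff_sub, Finset.sum_sub_distrib]
        rw [sum_sq hc, sum_pair hc, sub_self]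
    · intro f; simp
    · intro x y hx hy px py f
      rw [mul_add]
      simp only [coeff_add, Finset.sum_add_distrib]
      rw [px f, py f, add_zero]
    · intro a x hx px f
      rw [smul_eq_mul, ← mul_assoc]
      exact px (f * a)
  have h1 := key 1
  rw [one_mul, sum_target hc] at h1
  exact one_ne_zero h1
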